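/- A line segment between two satellites, both on a sphere of radius R_s > R_⊕ centered at the origin, does not intersect the open ball of radius R_⊕ whenever their Euclidean distance l satisfies l ≤ 2√(R_s² − R_⊕²). -/

import Mathlib

open Real

/-- A line segment between two satellites, both on a sphere of radius `R_s > R⊕` centered
at the origin, does not intersect the open ball of radius `R⊕` whenever their Euclidean
distance `l` satisfies `l ≤ 2 √(R_s² − R⊕²)`. -/
theorem inter_satellite_link_not_blocked (Re Rs : ℝ) (hRe : 0 < Re) (hRs : Re < Rs)
    (p q : EuclideanSpace ℝ (Fin 3)) (hp : ‖p‖ = Rs) (hq : ‖q‖ = Rs)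
    (hl : dist p q ≤ 2 * Real.sqrt (Rs ^ 2 - Re ^ 2)) :
    ∀ x ∈ segment ℝ p q, Re ≤ ‖x‖ := by
  rintro x ⟨a, b, ha, hb, hab, rfl⟩
  have hnn : (0:ℝ) ≤ Rs ^ 2 - Re ^ 2 := by nlinarith
  have hsq := Real.sq_sqrt hnn
  have hd : dist p q = ‖p - q‖ := dist_eq_norm p q
  have h1 : ‖p - q‖ ^ 2 ≤ 4 * (Rs ^ 2 - Re ^ 2) := by
    nlinarith [norm_nonneg (p - q), Real.sqrt_nonneg (Rs ^ 2 - Re ^ 2), hl, hd]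
  have e1 : ‖a • p + b • q‖ ^ 2
      = a ^ 2 * Rs ^ 2 + b ^ 2 * Rs ^ 2 + 2 * a * b * inner ℝ p q := by
    rw [norm_add_sq_real]
    rw [norm_smul, norm_smul, real_inner_smul_left, real_inner_smul_right]
    simp [hp, hq, abs_of_nonneg ha, abs_of_nonneg hb]
    ring
  have e2 : ‖p - q‖ ^ 2 = 2 * Rs ^ 2 - 2 * inner ℝ p q := by
    rw [norm_sub_sq_real, hp, hq]; ring
  have key : Re ^ 2 ≤ ‖a • p + b • q‖ ^ 2 := by
    rw [e1]
    have hi : (inner ℝ p q : ℝ) = Rs ^ 2 - ‖p - q‖ ^ 2 / 2 := by linarith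
    rw [hi]
    have hb1 : b = 1 - a := by linarith
    subst hb1
    have hab4 : a * (1 - a) ≤ 1 / 4 := by nlinarith [sq_nonneg (a - (1 - a))]
    nlinarith [mul_nonneg (by linarith : (0:ℝ) ≤ 1 / 4 - a * (1 - a)) (sq_nonneg ‖p - q‖),
      mul_nonneg ha hb]
  nlinarith [norm_nonneg (a • p + b • q), key]
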